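/- For every natural number n ≥ 0, over the theory DB₀ the schema Sep(Σ_{n+1}) (separation with parameters for Σ_{n+1} formulas) is deductively equivalent to the schema Sep⁻(Σ_{n+1}) (parameter-free separation for Σ_{n+1} formulas). -/

import Mathlib

/- A deep embedding of the first-order language of set theory L_∈ = {∈, =},
   with named variables indexed by ℕ. -/

namespace FOSet

/-- Formulas of L_∈ with variables indexed by ℕ. -/
inductive Fml : Type
  | mem : ℕ → ℕ → Fml
  | eq  : ℕ → ℕ → Fml
  | not : Fml → Fml
  | and : Fml → Fml → Fml
  | or  : Fml → Fml → Fml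
  | imp : Fml → Fml → Fml
  | all : ℕ → Fml → Fml
  | ex  : ℕ → Fml → Fml

namespace Fml

/-- Free variables of a formula. -/
def fv : Fml → Set ℕ
  | mem i j => {i, j}
  | eq i j  => {i, j}
  | not φ   => φ.fv
  | and φ ψ => φ.fv ∪ ψ.fv
  | or φ ψ  => φ.fv ∪ ψ.fv
  | imp φ ψ => φ.fv ∪ ψ.fv
  | all i φ => φ.fv \ {i}
  | ex i φ  => φ.fv \ {i}

end Fml

/-- Satisfaction, in the substructure of `(N, E)` with domain `S`, of a formula
under a valuation `v` : quantifiers range over `S`. -/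
def SatIn {N : Type} (E : N → N → Prop) (S : Set N) : (ℕ → N) → Fml → Prop
  | v, .mem i j => E (v i) (v j)
  | v, .eq i j  => v i = v j
  | v, .not φ   => ¬ SatIn E S v φ
  | v, .and φ ψ => SatIn E S v φ ∧ SatIn E S v ψ
  | v, .or φ ψ  => SatIn E S v φ ∨ SatIn E S v ψ
  | v, .imp φ ψ => SatIn E S v φ → SatIn E S v ψ
  | v, .all i φ => ∀ a ∈ S, SatIn E S (Function.update v i a) φ
  | v, .ex i φ  => ∃ a ∈ S, SatIn E S (Function.update v i a) φ

/-- Satisfaction in the full structure `(N, E)`. -/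
def Sat {N : Type} (E : N → N → Prop) (v : ℕ → N) (φ : Fml) : Prop :=
  SatIn E Set.univ v φ

/-- Δ₀ (= Σ₀ = Π₀) formulas: every quantifier is bounded, i.e. of the form
`∀ x ∈ y` or `∃ x ∈ y`. -/
inductive IsDelta0 : Fml → Prop
  | mem (i j : ℕ) : IsDelta0 (Fml.mem i j)
  | eq (i j : ℕ)  : IsDelta0 (Fml.eq i j)
  | not {φ} : IsDelta0 φ → IsDelta0 φ.not
  | and {φ ψ} : IsDelta0 φ → IsDelta0 ψ → IsDelta0 (φ.and ψ)
  | or {φ ψ}  : IsDelta0 φ → IsDelta0 ψ → IsDelta0 (φ.or ψ)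
  | imp {φ ψ} : IsDelta0 φ → IsDelta0 ψ → IsDelta0 (φ.imp ψ)
  | ball {i j : ℕ} {φ} : i ≠ j → IsDelta0 φ →
      IsDelta0 (Fml.all i ((Fml.mem i j).imp φ))
  | bex {i j : ℕ} {φ} : i ≠ j → IsDelta0 φ →
      IsDelta0 (Fml.ex i ((Fml.mem i j).and φ))

/-- The Lévy hierarchy: `(levels n).1` is the class of Σ_n formulas and
`(levels n).2` the class of Π_n formulas. -/
def levels : ℕ → (Fml → Prop) × (Fml → Prop)
  | 0 => (IsDelta0, IsDelta0)
  | n + 1 =>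
      (fun φ => ∃ i ψ, (levels n).2 ψ ∧ φ = Fml.ex i ψ,
       fun φ => ∃ i ψ, (levels n).1 ψ ∧ φ = Fml.all i ψ)

def IsSigma (n : ℕ) : Fml → Prop := (levels n).1

def IsPi (n : ℕ) : Fml → Prop := (levels n).2

variable {M N : Type}

/-- `p` is the (Kuratowski) pair `{a, b}` in the sense of `E`. -/
def IsPairOf (E : M → M → Prop) (p a b : M) : Prop :=
  ∀ w, E w p ↔ (w = a ∨ w = b)

/-- `z` is the ordered pair `(a, b)` (Kuratowski) in the sense of `E`. -/
def IsOPairOf (E : M → M → Prop) (z a b : M) : Prop :=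
  ∃ s t, IsPairOf E s a a ∧ IsPairOf E t a b ∧ IsPairOf E z s t

/-- Valuation sending variable 0 to `x` and every other variable to `y`;
used for formulas φ(x, y) with free variables among {0, 1}. -/
def val2 (x y : M) : ℕ → M := fun k => if k = 0 then x else y

/-- Valuation sending 0 ↦ x, 1 ↦ y, everything else ↦ v;
used for formulas φ(x, y, v) with free variables among {0, 1, 2}. -/
def val3 (x y v : M) : ℕ → M := fun k => if k = 0 then x else if k = 1 then y else v

/-- `M ⊨ Sep(φ)` for φ = φ(x, v) (x is variable 0, v is variable 1):
∀v∀p∃q∀x(x∈q ↔ x∈p ∧ φ(x,v)). -/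
def SepAx (E : M → M → Prop) (φ : Fml) : Prop :=
  ∀ v p : M, ∃ q : M, ∀ x : M, E x q ↔ (E x p ∧ Sat E (val2 x v) φ)

/-- `M ⊨ Sep⁻(φ)` for a parameter-free φ = φ(x) (x is variable 0). -/
def SepMinusAx (E : M → M → Prop) (φ : Fml) : Prop :=
  ∀ p : M, ∃ q : M, ∀ x : M, E x q ↔ (E x p ∧ Sat E (fun _ => x) φ)

/-- `(M, E) ⊨ DB₀`: extensionality, empty set, pairing, union, cartesian
product, and Δ₀ separation. -/
def SatDB0 (E : M → M → Prop) : Prop :=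
  (∀ a b : M, (∀ x, E x a ↔ E x b) → a = b) ∧
  (∃ e : M, ∀ x, ¬ E x e) ∧
  (∀ a b : M, ∃ p, IsPairOf E p a b) ∧
  (∀ a : M, ∃ u, ∀ x, E x u ↔ ∃ y, E y a ∧ E x y) ∧
  (∀ a b : M, ∃ c, ∀ z, E z c ↔ ∃ x y, E x a ∧ E y b ∧ IsOPairOf E z x y) ∧
  (∀ φ, IsDelta0 φ → φ.fv ⊆ {0, 1} → SepAx E φ)

/-- `M ⊨ Coll(φ)` for φ = φ(x, y, v) (x = var 0, y = var 1, v = var 2):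
∀v∀p(∀x∈p ∃y φ → ∃q ∀x∈p ∃y∈q φ). -/
def CollAx (E : M → M → Prop) (φ : Fml) : Prop :=
  ∀ v p : M, (∀ x, E x p → ∃ y, Sat E (val3 x y v) φ) →
    ∃ q, ∀ x, E x p → ∃ y, E y q ∧ Sat E (val3 x y v) φ

/-- `M ⊨ Coll_s(φ)`: ∀v∀p∃q∀x∈p(∃y φ ↔ ∃y∈q φ). -/
def CollSAx (E : M → M → Prop) (φ : Fml) : Prop :=
  ∀ v p : M, ∃ q, ∀ x, E x p →
    ((∃ y, Sat E (val3 x y v) φ) ↔ ∃ y, E y q ∧ Sat E (val3 x y v) φ)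

/-- `M ⊨ Coll_w(φ)`: ∀v(∀x∃y φ → ∀p∃q∀x∈p∃y∈q φ). -/
def CollWAx (E : M → M → Prop) (φ : Fml) : Prop :=
  ∀ v : M, (∀ x, ∃ y, Sat E (val3 x y v) φ) →
    ∀ p, ∃ q, ∀ x, E x p → ∃ y, E y q ∧ Sat E (val3 x y v) φ

/-- `M ⊨ Coll⁻(φ)` for a parameter-free φ = φ(x, y) (x = var 0, y = var 1). -/
def CollMinusAx (E : M → M → Prop) (φ : Fml) : Prop :=
  ∀ p : M, (∀ x, E x p → ∃ y, Sat E (val2 x y) φ) →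
    ∃ q, ∀ x, E x p → ∃ y, E y q ∧ Sat E (val2 x y) φ

/-- `M ⊨ Coll_w⁻(φ)` for a parameter-free φ = φ(x, y). -/
def CollWMinusAx (E : M → M → Prop) (φ : Fml) : Prop :=
  (∀ x : M, ∃ y, Sat E (val2 x y) φ) →
    ∀ p, ∃ q, ∀ x, E x p → ∃ y, E y q ∧ Sat E (val2 x y) φ

/-- `M ⊨ Coll_s⁻(φ)` for a parameter-free φ = φ(x, y). -/
def CollSMinusAx (E : M → M → Prop) (φ : Fml) : Prop :=
  ∀ p : M, ∃ q, ∀ x, E x p →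
    ((∃ y, Sat E (val2 x y) φ) ↔ ∃ y, E y q ∧ Sat E (val2 x y) φ)

/- Schemas over a class Γ of formulas. -/

def CollScheme (E : M → M → Prop) (Γ : Fml → Prop) : Prop :=
  ∀ φ, Γ φ → φ.fv ⊆ {0, 1, 2} → CollAx E φ

def CollSScheme (E : M → M → Prop) (Γ : Fml → Prop) : Prop :=
  ∀ φ, Γ φ → φ.fv ⊆ {0, 1, 2} → CollSAx E φ

def CollWScheme (E : M → M → Prop) (Γ : Fml → Prop) : Prop :=
  ∀ φ, Γ φ → φ.fv ⊆ {0, 1, 2} → CollWAx E φ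

def CollMinusScheme (E : M → M → Prop) (Γ : Fml → Prop) : Prop :=
  ∀ φ, Γ φ → φ.fv ⊆ {0, 1} → CollMinusAx E φ

def CollWMinusScheme (E : M → M → Prop) (Γ : Fml → Prop) : Prop :=
  ∀ φ, Γ φ → φ.fv ⊆ {0, 1} → CollWMinusAx E φ

def CollSMinusScheme (E : M → M → Prop) (Γ : Fml → Prop) : Prop :=
  ∀ φ, Γ φ → φ.fv ⊆ {0, 1} → CollSMinusAx E φ

def SepScheme (E : M → M → Prop) (Γ : Fml → Prop) : Prop :=
  ∀ φ, Γ φ → φ.fv ⊆ {0, 1} → SepAx E φ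

def SepMinusScheme (E : M → M → Prop) (Γ : Fml → Prop) : Prop :=
  ∀ φ, Γ φ → φ.fv ⊆ {0} → SepMinusAx E φ

/- Extensions. We present an extension `M ⊆ N` by an embedding `f : M → N`. -/

/-- `f` embeds `(M, EM)` as a substructure of `(N, EN)`. -/
def SubStr (EM : M → M → Prop) (EN : N → N → Prop) (f : M → N) : Prop :=
  Function.Injective f ∧ ∀ a b : M, EM a b ↔ EN (f a) (f b)

/-- `f : M → N` is a (fully) elementary embedding. -/
def ElemEmb (EM : M → M → Prop) (EN : N → N → Prop) (f : M → N) : Prop :=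
  ∀ (φ : Fml) (v : ℕ → M), Sat EM v φ ↔ Sat EN (f ∘ v) φ

/-- `f : M → N` is a Σ_n-elementary embedding (M ≺_{Σ_n} N). -/
def SigmaElemEmb (n : ℕ) (EM : M → M → Prop) (EN : N → N → Prop) (f : M → N) : Prop :=
  ∀ φ, IsSigma n φ → ∀ v : ℕ → M, Sat EM v φ ↔ Sat EN (f ∘ v) φ

/-- `f : M → N` is a Δ₀-elementary embedding (M ≺_{Δ₀} N). -/
def Delta0ElemEmb (EM : M → M → Prop) (EN : N → N → Prop) (f : M → N) : Prop :=
  ∀ φ, IsDelta0 φ → ∀ v : ℕ → M, Sat EM v φ ↔ Sat EN (f ∘ v) φ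

/-- The convex hull M* of (the image of) M in N:
{a ∈ N : N ⊨ a ∈ m for some m ∈ M}. -/
def hull (EN : N → N → Prop) (f : M → N) : Set N := {a | ∃ m : M, EN a (f m)}

/-- The substructure of `N` with domain `S` is a Σ_n-elementary substructure of
`N` (S ≺_{Σ_n} N). -/
def SigmaElemInTop (n : ℕ) (EN : N → N → Prop) (S : Set N) : Prop :=
  ∀ φ, IsSigma n φ → ∀ v : ℕ → N, (∀ k, v k ∈ S) → (SatIn EN S v φ ↔ Sat EN v φ)

/-- The substructure of `N` with domain `S` is a fully elementary substructure. -/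
def ElemInTop (EN : N → N → Prop) (S : Set N) : Prop :=
  ∀ (φ : Fml) (v : ℕ → N), (∀ k, v k ∈ S) → (SatIn EN S v φ ↔ Sat EN v φ)

/-- `f` is a Σ_n-elementary embedding of `M` into the substructure of `N` with
domain `S` (e.g. M ≺_{Σ_n} M*). -/
def SigmaElemEmbInto (n : ℕ) (EM : M → M → Prop) (EN : N → N → Prop) (f : M → N)
    (S : Set N) : Prop :=
  ∀ φ, IsSigma n φ → ∀ v : ℕ → M, Sat EM v φ ↔ SatIn EN S (f ∘ v) φ

/-- `f` is a fully elementary embedding of `M` into the substructure of `N`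
with domain `S`. -/
def ElemEmbInto (EM : M → M → Prop) (EN : N → N → Prop) (f : M → N) (S : Set N) : Prop :=
  ∀ (φ : Fml) (v : ℕ → M), Sat EM v φ ↔ SatIn EN S (f ∘ v) φ

/-- The extension presented by `f` is an end extension. -/
def IsEndEmb (EN : N → N → Prop) (f : M → N) : Prop :=
  ∀ (m : M) (a : N), EN a (f m) → ∃ m', f m' = a

/-- The extension presented by `f` is cofinal. -/
def Cofinal (EN : N → N → Prop) (f : M → N) : Prop :=
  ∀ a : N, ∃ m : M, EN a (f m)

/-- `a` is a transitive set in the sense of `(N, EN)`. -/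
def TransIn (EN : N → N → Prop) (a : N) : Prop :=
  ∀ x, EN x a → ∀ y, EN y x → EN y a

/-- The extension presented by `f` is taller. -/
def Taller (EN : N → N → Prop) (f : M → N) : Prop :=
  ∃ a : N, ∀ m : M, EN (f m) a

/-- The extension presented by `f` is taller*. -/
def TallerStar (EN : N → N → Prop) (f : M → N) : Prop :=
  ∃ a : N, (∀ m : M, EN (f m) a) ∧ TransIn EN a

/-- Property end_n: for every elementary extension N of M, M* ≺_{Σ_n} N. -/
def HasEnd (n : ℕ) (EM : M → M → Prop) : Prop :=
  ∀ (N : Type) (EN : N → N → Prop) (f : M → N), ElemEmb EM EN f →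
    SigmaElemInTop n EN (hull EN f)

/-- Property cof_n: for every elementary extension N of M, M ≺_{Σ_n} M*. -/
def HasCof (n : ℕ) (EM : M → M → Prop) : Prop :=
  ∀ (N : Type) (EN : N → N → Prop) (f : M → N), ElemEmb EM EN f →
    SigmaElemEmbInto n EM EN f (hull EN f)

/-- Property COF_n: for every Δ₀-elementary cofinal extension N of M with
N ⊨ DB₀, M ≺_{Σ_n} N. -/
def HasCOF (n : ℕ) (EM : M → M → Prop) : Prop :=
  ∀ (N : Type) (EN : N → N → Prop) (f : M → N), SatDB0 EN →
    Delta0ElemEmb EM EN f → Cofinal EN f → SigmaElemEmb n EM EN f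

/-- TCo: every set is an element of some transitive set. -/
def SatTCo (E : M → M → Prop) : Prop :=
  ∀ a : M, ∃ t, E a t ∧ TransIn E t

/-- `a` is an ordinal in the sense of `(M, E)`: a transitive set linearly
ordered by `E`. -/
def OrdIn (E : M → M → Prop) (a : M) : Prop :=
  TransIn E a ∧ ∀ x y, E x a → E y a → (E x y ∨ x = y ∨ E y x)

/-- The formula φ(p, α, v) (p = var 0, α = var 1, v = var 2), with parameter
`v ∈ M`, defines a resolution on `(M, E)`. -/
def IsResolution (E : M → M → Prop) (φ : Fml) (v : M) : Prop :=
  φ.fv ⊆ {0, 1, 2} ∧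
  (∀ α, OrdIn E α → ∃! p, Sat E (val3 p α v) φ) ∧
  (∀ α β p q, E α β → Sat E (val3 p α v) φ → Sat E (val3 q β v) φ →
    ∀ x, E x p → E x q) ∧
  (∀ x, ∃ α, OrdIn E α ∧ ∀ p, Sat E (val3 p α v) φ → E x p)

end FOSet

/-! Over DB₀ a parameter can be packed into an ordered pair. For a Σ_n formula φ(x, w) there is
a parameter-free Σ_n formula θ(z) with θ((x, w)) ↔ φ(x, w): shift the variables of φ so that
`x, w` become `1, 2`, then, going down the quantifier prefix (renaming each quantified variable
to a fresh one), bind `1, 2` inside the Δ₀ matrix to the coordinates of `z` by bounded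
quantifiers. Sep⁻(θ) applied to `p × {v}` gives `{(x, v) : x ∈ p ∧ φ(x, v)}`, from which Δ₀
separation with this set as parameter cuts out `{x ∈ p : φ(x, v)}`. -/

namespace FOSet

open Fml Function

section

variable {M : Type} {E : M → M → Prop}

namespace Fml

/-- Renames every variable occurrence, bound ones included. -/
def rename (ρ : ℕ → ℕ) : Fml → Fml
  | mem i j => mem (ρ i) (ρ j)
  | eq i j  => eq (ρ i) (ρ j)
  | not φ   => not (φ.rename ρ)
  | and φ ψ => and (φ.rename ρ) (ψ.rename ρ)
  | or φ ψ  => or (φ.rename ρ) (ψ.rename ρ)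
  | imp φ ψ => imp (φ.rename ρ) (ψ.rename ρ)
  | all i φ => all (ρ i) (φ.rename ρ)
  | ex i φ  => ex (ρ i) (φ.rename ρ)

/-- A strict upper bound for the variables occurring in a formula. -/
def varBound : Fml → ℕ
  | mem i j | eq i j => max i j + 1
  | not φ => φ.varBound
  | and φ ψ | or φ ψ | imp φ ψ => max φ.varBound ψ.varBound
  | all i φ | ex i φ => max (i + 1) φ.varBound

theorem lt_varBound_of_mem_fv {φ : Fml} {k : ℕ} (hk : k ∈ φ.fv) : k < φ.varBound := by
  induction φ with
  | mem i j | eq i j =>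
    simp only [fv, Set.mem_insert_iff, Set.mem_singleton_iff] at hk
    simp only [varBound]; omega
  | not φ ih => exact ih hk
  | and φ ψ ihφ ihψ | or φ ψ ihφ ihψ | imp φ ψ ihφ ihψ =>
    simp only [varBound]
    rcases hk with hk | hk
    · exact lt_max_of_lt_left (ihφ hk)
    · exact lt_max_of_lt_right (ihψ hk)
  | all i φ ih | ex i φ ih => exact lt_max_of_lt_right (ih hk.1)

theorem fv_rename (ρ : ℕ → ℕ) (φ : Fml) : (φ.rename ρ).fv ⊆ ρ '' φ.fv := by
  induction φ with
  | mem i j | eq i j => simp [rename, fv, Set.image_pair]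
  | not φ ih => exact ih
  | and φ ψ ihφ ihψ | or φ ψ ihφ ihψ | imp φ ψ ihφ ihψ =>
    rw [rename, fv, fv, Set.image_union]
    exact Set.union_subset_union ihφ ihψ
  | all i φ ih | ex i φ ih =>
    rintro _ ⟨hk, hki⟩
    obtain ⟨m, hm, rfl⟩ := ih hk
    exact ⟨m, ⟨hm, fun h => hki (congrArg ρ h)⟩, rfl⟩

theorem fv_rename_swap {φ : Fml} {q j : ℕ} (hj : j ∉ φ.fv) :
    (φ.rename (Equiv.swap q j)).fv ⊆ insert j (φ.fv \ {q}) := by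
  rintro _ hk
  obtain ⟨m, hm, rfl⟩ := fv_rename _ φ hk
  rcases eq_or_ne m q with rfl | hmq
  · exact .inl (Equiv.swap_apply_left m j)
  · rw [Equiv.swap_apply_of_ne_of_ne hmq (ne_of_mem_of_not_mem hm hj)]
    exact .inr ⟨hm, hmq⟩

end Fml

theorem IsDelta0.rename {ρ : ℕ → ℕ} (hρ : Injective ρ) {φ : Fml} (h : IsDelta0 φ) :
    IsDelta0 (φ.rename ρ) := by
  induction h with
  | mem i j => exact .mem _ _
  | eq i j => exact .eq _ _
  | not _ ih => exact .not ih
  | and _ _ ih₁ ih₂ => exact .and ih₁ ih₂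
  | or _ _ ih₁ ih₂ => exact .or ih₁ ih₂
  | imp _ _ ih₁ ih₂ => exact .imp ih₁ ih₂
  | ball hij _ ih => exact .ball (hρ.ne hij) ih
  | bex hij _ ih => exact .bex (hρ.ne hij) ih

theorem isSigma_rename_and_isPi_rename {ρ : ℕ → ℕ} (hρ : Injective ρ) (n : ℕ) :
    (∀ {φ : Fml}, IsSigma n φ → IsSigma n (φ.rename ρ)) ∧
      ∀ {φ : Fml}, IsPi n φ → IsPi n (φ.rename ρ) := by
  induction n with
  | zero => exact ⟨IsDelta0.rename hρ, IsDelta0.rename hρ⟩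
  | succ n ih =>
    exact ⟨fun ⟨i, ψ, hψ, h⟩ => ⟨ρ i, ψ.rename ρ, ih.2 hψ, by rw [h, rename]⟩,
      fun ⟨i, ψ, hψ, h⟩ => ⟨ρ i, ψ.rename ρ, ih.1 hψ, by rw [h, rename]⟩⟩

@[simp] theorem sat_mem {v : ℕ → M} {i j : ℕ} : Sat E v (mem i j) ↔ E (v i) (v j) := Iff.rfl

@[simp] theorem sat_and {v : ℕ → M} {φ ψ : Fml} :
    Sat E v (φ.and ψ) ↔ Sat E v φ ∧ Sat E v ψ := Iff.rfl

@[simp] theorem sat_ex {v : ℕ → M} {i : ℕ} {φ : Fml} :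
    Sat E v (ex i φ) ↔ ∃ a, Sat E (update v i a) φ := by
  simp [Sat, SatIn]

theorem satIn_congr {N : Type} {E : N → N → Prop} {S : Set N} (φ : Fml) {v w : ℕ → N}
    (h : ∀ k ∈ φ.fv, v k = w k) : SatIn E S v φ ↔ SatIn E S w φ := by
  induction φ generalizing v w with
  | mem i j | eq i j =>
    simp only [SatIn, h i (.inl rfl), h j (.inr rfl)]
  | not φ ih => exact not_congr (ih h)
  | and φ ψ ihφ ihψ | or φ ψ ihφ ihψ | imp φ ψ ihφ ihψ =>
    simp only [SatIn, ihφ fun k hk => h k (.inl hk), ihψ fun k hk => h k (.inr hk)]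
  | all i φ ih | ex i φ ih =>
    have hupd (a : N) : ∀ k ∈ φ.fv, update v i a k = update w i a k := by
      intro k hk
      rcases eq_or_ne k i with rfl | hki
      · simp
      · simp only [update_of_ne hki, h k ⟨hk, hki⟩]
    simp only [SatIn, ih (hupd _)]

theorem sat_congr (φ : Fml) {v w : ℕ → M} (h : ∀ k ∈ φ.fv, v k = w k) :
    Sat E v φ ↔ Sat E w φ :=
  satIn_congr φ h

theorem satIn_rename {N : Type} {E : N → N → Prop} {S : Set N} {ρ : ℕ → ℕ}
    (hρ : Injective ρ) (φ : Fml) (v : ℕ → N) :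
    SatIn E S v (φ.rename ρ) ↔ SatIn E S (v ∘ ρ) φ := by
  induction φ generalizing v with
  | mem i j | eq i j => rfl
  | not φ ih => exact not_congr (ih v)
  | and φ ψ ihφ ihψ | or φ ψ ihφ ihψ | imp φ ψ ihφ ihψ =>
    simp only [rename, SatIn, ihφ, ihψ]
  | all i φ ih | ex i φ ih =>
    simp only [rename, SatIn, ih, update_comp_eq_of_injective _ hρ]

theorem sat_rename {ρ : ℕ → ℕ} (hρ : Injective ρ) (φ : Fml) (v : ℕ → M) :
    Sat E v (φ.rename ρ) ↔ Sat E (v ∘ ρ) φ :=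
  satIn_rename hρ φ v

theorem sat_quant_congr {Q : ℕ → Fml → Fml} (hQ : Q = ex ∨ Q = all) {v w : ℕ → M}
    {i j : ℕ} {φ ψ : Fml} (h : ∀ a, Sat E (update v i a) φ ↔ Sat E (update w j a) ψ) :
    Sat E v (Q i φ) ↔ Sat E w (Q j ψ) := by
  rcases hQ with rfl | rfl
  · exact exists_congr fun a => and_congr_right fun _ => h a
  · exact forall_congr' fun a => forall_congr' fun _ => h a

theorem fv_quant {Q : ℕ → Fml → Fml} (hQ : Q = ex ∨ Q = all) (i : ℕ) (φ : Fml) :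
    (Q i φ).fv = φ.fv \ {i} := by
  rcases hQ with rfl | rfl <;> rfl

theorem sat_quant_rename_swap {Q : ℕ → Fml → Fml} (hQ : Q = ex ∨ Q = all) {q j : ℕ}
    {φ : Fml} (hj : j ∉ φ.fv) (v : ℕ → M) :
    Sat E v (Q j (φ.rename (Equiv.swap q j))) ↔ Sat E v (Q q φ) := by
  refine sat_quant_congr hQ fun a => (sat_rename (Equiv.injective _) φ _).trans <|
    sat_congr φ fun k hk => ?_
  have hkj : k ≠ j := ne_of_mem_of_not_mem hk hj
  rcases eq_or_ne k q with rfl | hkq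
  · simp
  · simp [Equiv.swap_apply_of_ne_of_ne hkq hkj, update_of_ne hkq, update_of_ne hkj]

theorem isPairOf_iff {p a b : M} :
    IsPairOf E p a b ↔ E a p ∧ E b p ∧ ∀ u, E u p → u = a ∨ u = b := by
  refine ⟨fun h => ⟨(h a).2 (.inl rfl), (h b).2 (.inr rfl), fun u => (h u).1⟩, ?_⟩
  rintro ⟨ha, hb, h⟩ u
  exact ⟨h u, by rintro (rfl | rfl) <;> assumption⟩

namespace IsOPairOf

variable {z x w : M}

theorem forall_mem_iff (h : IsOPairOf E z x w) (u : M) : (∀ S, E S z → E u S) ↔ u = x := by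
  obtain ⟨S, T, hS, hT, hz⟩ := h
  refine ⟨fun hu => ((hS u).1 (hu S ((hz S).2 (.inl rfl)))).elim id id, ?_⟩
  rintro rfl S' hS'
  rcases (hz S').1 hS' with rfl | rfl
  · exact (hS u).2 (.inl rfl)
  · exact (hT u).2 (.inl rfl)

theorem exists_mem_iff (h : IsOPairOf E z x w) (u : M) :
    (∃ S, E S z ∧ E u S) ↔ u = x ∨ u = w := by
  obtain ⟨S, T, hS, hT, hz⟩ := h
  constructor
  · rintro ⟨S', hS', hu⟩
    rcases (hz S').1 hS' with rfl | rfl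
    · exact .inl (((hS u).1 hu).elim id id)
    · exact (hT u).1 hu
  · rintro (rfl | rfl)
    · exact ⟨S, (hz S).2 (.inl rfl), (hS u).2 (.inl rfl)⟩
    · exact ⟨T, (hz T).2 (.inr rfl), (hT u).2 (.inr rfl)⟩

theorem unique {x' w' : M} (h : IsOPairOf E z x w) (h' : IsOPairOf E z x' w') :
    x = x' ∧ w = w' := by
  obtain rfl : x' = x := (h.forall_mem_iff x').1 ((h'.forall_mem_iff x').2 rfl)
  refine ⟨rfl, ?_⟩
  rcases (h'.exists_mem_iff w).1 ((h.exists_mem_iff w).2 (.inr rfl)) with hw | hw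
  · rcases (h.exists_mem_iff w').1 ((h'.exists_mem_iff w').2 (.inr rfl)) with hw' | hw'
    · exact hw.trans hw'.symm
    · exact hw'.symm
  · exact hw

end IsOPairOf

theorem SatDB0.exists_isOPairOf (hM : SatDB0 E) (x w : M) : ∃ z, IsOPairOf E z x w := by
  obtain ⟨S, hS⟩ := hM.2.2.1 x x
  obtain ⟨T, hT⟩ := hM.2.2.1 x w
  obtain ⟨z, hz⟩ := hM.2.2.1 S T
  exact ⟨z, S, T, hS, hT, hz⟩

/-- `p = {a, b}`, with `u` as bound variable. -/
def isPairFml (p a b u : ℕ) : Fml :=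
  (mem a p).and ((mem b p).and (all u ((mem u p).imp ((eq u a).or (eq u b)))))

theorem isDelta0_isPairFml {p a b u : ℕ} (hu : u ≠ p) : IsDelta0 (isPairFml p a b u) :=
  .and (.mem _ _) (.and (.mem _ _) (.ball hu (.or (.eq _ _) (.eq _ _))))

theorem sat_isPairFml {p a b u : ℕ} (hp : u ≠ p) (ha : u ≠ a) (hb : u ≠ b) (v : ℕ → M) :
    Sat E v (isPairFml p a b u) ↔ IsPairOf E (v p) (v a) (v b) := by
  simp [isPairFml, Sat, SatIn, isPairOf_iff, update_of_ne hp.symm, update_of_ne ha.symm,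
    update_of_ne hb.symm]

/-- `∃ S ∈ z, ∃ x ∈ S, ∃ T ∈ z, ∃ w ∈ T, (S = {x} ∧ T = {x, w} ∧ z = {S, T}) ∧ σ`, with
`z, x, w, S, T` the variables `0, 1, 2, B, B + 1`: it binds the variables `1, 2` of `σ` to the
coordinates of the pair `z`. -/
def pairBlock (B : ℕ) (σ : Fml) : Fml :=
  ex B ((mem B 0).and (ex 1 ((mem 1 B).and (ex (B + 1) ((mem (B + 1) 0).and
    (ex 2 ((mem 2 (B + 1)).and (((isPairFml B 1 1 (B + 2)).and
      ((isPairFml (B + 1) 1 2 (B + 2)).and (isPairFml 0 B (B + 1) (B + 2)))).and σ))))))))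

theorem isDelta0_pairBlock {B : ℕ} (hB : 3 ≤ B) {σ : Fml} (hσ : IsDelta0 σ) :
    IsDelta0 (pairBlock B σ) :=
  .bex (by omega) <| .bex (by omega) <| .bex (by omega) <| .bex (by omega) <|
    .and (.and (isDelta0_isPairFml (by omega)) (.and (isDelta0_isPairFml (by omega))
      (isDelta0_isPairFml (by omega)))) hσ

theorem fv_pairBlock (B : ℕ) (σ : Fml) : (pairBlock B σ).fv ⊆ insert 0 (σ.fv \ {1, 2}) := by
  intro k hk
  simp only [pairBlock, isPairFml, fv, Set.mem_sdiff, Set.mem_union, Set.mem_insert_iff,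
    Set.mem_singleton_iff] at hk ⊢
  grind

theorem sat_pairBlock {B : ℕ} (hB : 3 ≤ B) {σ : Fml} (hσ : ∀ k ∈ σ.fv, k < B) (v : ℕ → M) :
    Sat E v (pairBlock B σ) ↔
      ∃ x w, IsOPairOf E (v 0) x w ∧ Sat E (update (update v 1 x) 2 w) σ := by
  have hupd (S x T w : M) : Sat E (update (update (update (update v B S) 1 x) (B + 1) T) 2 w) σ ↔
      Sat E (update (update v 1 x) 2 w) σ :=
    sat_congr σ fun k hk => by
      have := hσ k hk
      simp only [update_apply]
      split_ifs <;> first | rfl | omega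
  simp (disch := omega) only [pairBlock, sat_ex, sat_and, sat_mem, hupd,
    sat_isPairFml, update_self, update_of_ne]
  constructor
  · rintro ⟨S, -, x, -, T, -, w, -, ⟨hS, hT, hz⟩, h⟩
    exact ⟨x, w, ⟨S, T, hS, hT, hz⟩, h⟩
  · rintro ⟨x, w, ⟨S, T, hS, hT, hz⟩, h⟩
    exact ⟨S, (hz S).2 (.inl rfl), x, (hS x).2 (.inl rfl), T, (hz T).2 (.inr rfl), w,
      (hT w).2 (.inr rfl), ⟨hS, hT, hz⟩, h⟩

/-- `τ` says of the ordered pair in variable `0` what `σ` says of its coordinates in the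
variables `1` and `2`. -/
def PairSubst (E : M → M → Prop) (σ τ : Fml) : Prop :=
  ∀ (v : ℕ → M) (x w : M), IsOPairOf E (v 0) x w →
    (Sat E v τ ↔ Sat E (update (update v 1 x) 2 w) σ)

def AdmitsPairSubst (E : M → M → Prop) (Γ : Fml → Prop) : Prop :=
  ∀ σ, Γ σ → ∃ τ, Γ τ ∧ τ.fv ⊆ insert 0 (σ.fv \ {1, 2}) ∧ PairSubst E σ τ

theorem pairSubst_pairBlock {B : ℕ} (hB : 3 ≤ B) {σ : Fml} (hσ : ∀ k ∈ σ.fv, k < B) :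
    PairSubst E σ (pairBlock B σ) := by
  intro v x w hp
  rw [sat_pairBlock hB hσ]
  constructor
  · rintro ⟨x', w', hp', h⟩
    obtain ⟨rfl, rfl⟩ := hp.unique hp'
    exact h
  · exact fun h => ⟨x, w, hp, h⟩

theorem admitsPairSubst_isDelta0 : AdmitsPairSubst E IsDelta0 := fun σ hσ =>
  ⟨pairBlock (σ.varBound + 3) σ, isDelta0_pairBlock (by omega) hσ, fv_pairBlock _ σ,
    pairSubst_pairBlock (by omega) fun _ hk => (lt_varBound_of_mem_fv hk).trans (by omega)⟩

theorem PairSubst.quant {Q : ℕ → Fml → Fml} (hQ : Q = ex ∨ Q = all) {q j : ℕ} {σ τ : Fml}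
    (hj : j ∉ σ.fv) (hj₂ : 2 < j) (h : PairSubst E (σ.rename (Equiv.swap q j)) τ) :
    PairSubst E (Q q σ) (Q j τ) := by
  intro v x w hp
  rw [← sat_quant_rename_swap hQ hj]
  refine sat_quant_congr hQ fun a => ?_
  rw [h _ x w (by rwa [update_of_ne (by omega : (0 : ℕ) ≠ j)]),
    update_comm (by omega : j ≠ 1), update_comm (by omega : j ≠ 2)]

theorem AdmitsPairSubst.quant {Γ : Fml → Prop} (hΓ : AdmitsPairSubst E Γ)
    (hren : ∀ {ρ : ℕ → ℕ}, Injective ρ → ∀ {σ}, Γ σ → Γ (σ.rename ρ))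
    {Q : ℕ → Fml → Fml} (hQ : Q = ex ∨ Q = all) {q : ℕ} {σ : Fml} (hσ : Γ σ) :
    ∃ j τ, Γ τ ∧ (Q j τ).fv ⊆ insert 0 ((Q q σ).fv \ {1, 2}) ∧
      PairSubst E (Q q σ) (Q j τ) := by
  set j := σ.varBound + 3
  have hj : j ∉ σ.fv := fun hk => by have := lt_varBound_of_mem_fv hk; omega
  obtain ⟨τ, hτ, hfv, hsub⟩ := hΓ _ (hren (Equiv.swap q j).injective hσ)
  refine ⟨j, τ, hτ, ?_, hsub.quant hQ hj (by omega)⟩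
  rw [fv_quant hQ, fv_quant hQ]
  rintro k ⟨hk, hkj⟩
  rcases hfv hk with rfl | ⟨hk', hk12⟩
  · exact .inl rfl
  · rcases fv_rename_swap hj hk' with hkj' | hkσ
    · exact absurd hkj' hkj
    · exact .inr ⟨hkσ, hk12⟩

theorem admitsPairSubst_isSigma_and_isPi (n : ℕ) :
    AdmitsPairSubst E (IsSigma n) ∧ AdmitsPairSubst E (IsPi n) := by
  induction n with
  | zero => exact ⟨admitsPairSubst_isDelta0, admitsPairSubst_isDelta0⟩
  | succ n ih =>
    constructor
    · rintro _ ⟨q, σ, hσ, rfl⟩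
      obtain ⟨j, τ, hτ, hfv, hsub⟩ :=
        ih.2.quant (fun hρ => (isSigma_rename_and_isPi_rename hρ n).2) (.inl rfl) hσ
      exact ⟨_, ⟨j, τ, hτ, rfl⟩, hfv, hsub⟩
    · rintro _ ⟨q, σ, hσ, rfl⟩
      obtain ⟨j, τ, hτ, hfv, hsub⟩ :=
        ih.1.quant (fun hρ => (isSigma_rename_and_isPi_rename hρ n).1) (.inr rfl) hσ
      exact ⟨_, ⟨j, τ, hτ, rfl⟩, hfv, hsub⟩

theorem exists_isSigma_pairCode {n : ℕ} {φ : Fml} (hφ : IsSigma n φ) (hfv : φ.fv ⊆ {0, 1}) :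
    ∃ θ, IsSigma n θ ∧ θ.fv ⊆ {0} ∧
      ∀ (v : ℕ → M) (x w : M), IsOPairOf E (v 0) x w → (Sat E v θ ↔ Sat E (val2 x w) φ) := by
  obtain ⟨θ, hθ, hθfv, hsub⟩ := (admitsPairSubst_isSigma_and_isPi n).1 _
    ((isSigma_rename_and_isPi_rename Nat.succ_injective n).1 hφ)
  refine ⟨θ, hθ, fun k hk => ?_, fun v x w hp => (hsub v x w hp).trans ?_⟩
  · rcases hθfv hk with rfl | ⟨hk, hk12⟩
    · rfl
    · obtain ⟨m, hm, rfl⟩ := fv_rename _ φ hk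
      rcases hfv hm with rfl | rfl <;> simp at hk12
  · rw [sat_rename Nat.succ_injective]
    refine sat_congr φ fun k hk => ?_
    rcases hfv hk with rfl | rfl <;> simp [val2]

theorem SepAx.sepMinusAx {φ : Fml} (h : SepAx E φ) (hfv : φ.fv ⊆ {0}) : SepMinusAx E φ := by
  intro p
  obtain ⟨q, hq⟩ := h p p
  refine ⟨q, fun x => (hq x).trans (and_congr_right fun _ => sat_congr φ fun k hk => ?_)⟩
  obtain rfl : k = 0 := hfv hk
  rfl

/-- `x` is the first coordinate of a member of `g` (with `x`, `g` the variables `0`, `1`). -/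
def fstMemFml : Fml := ex 2 ((mem 2 1).and (all 3 ((mem 3 2).imp (mem 0 3))))

theorem isDelta0_fstMemFml : IsDelta0 fstMemFml := .bex (by omega) (.ball (by omega) (.mem _ _))

theorem fv_fstMemFml : fstMemFml.fv ⊆ {0, 1} := by
  intro k hk
  simp only [fstMemFml, fv, Set.mem_sdiff, Set.mem_union, Set.mem_insert_iff,
    Set.mem_singleton_iff] at hk ⊢
  omega

theorem sat_fstMemFml (x g : M) :
    Sat E (val2 x g) fstMemFml ↔ ∃ Z, E Z g ∧ ∀ S, E S Z → E x S := by
  simp [fstMemFml, Sat, SatIn, val2]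

theorem SatDB0.sepAx_of_sepMinusAx (hM : SatDB0 E) {φ θ : Fml} (hθ : SepMinusAx E θ)
    (hθφ : ∀ (v : ℕ → M) (x w : M), IsOPairOf E (v 0) x w → (Sat E v θ ↔ Sat E (val2 x w) φ)) :
    SepAx E φ := by
  have ⟨_, _, hpair, _, hprod, hsep⟩ := hM
  intro v p
  obtain ⟨b, hb⟩ := hpair v v
  obtain ⟨r, hr⟩ := hprod p b
  obtain ⟨g, hg⟩ := hθ r
  obtain ⟨q, hq⟩ := hsep _ isDelta0_fstMemFml fv_fstMemFml g p
  refine ⟨q, fun x => (hq x).trans (and_congr_right fun hx => ?_)⟩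
  rw [sat_fstMemFml]
  constructor
  · rintro ⟨Z, hZg, hxZ⟩
    obtain ⟨hZr, hZθ⟩ := (hg Z).1 hZg
    obtain ⟨x', y, -, hy, hZ⟩ := (hr Z).1 hZr
    obtain rfl : y = v := ((hb y).1 hy).elim id id
    obtain rfl : x = x' := (hZ.forall_mem_iff x).1 hxZ
    exact (hθφ _ _ _ hZ).1 hZθ
  · intro hφ
    obtain ⟨Z, hZ⟩ := hM.exists_isOPairOf x v
    have hZr : E Z r := (hr Z).2 ⟨x, v, hx, (hb v).2 (.inl rfl), hZ⟩
    exact ⟨Z, (hg Z).2 ⟨hZr, (hθφ (fun _ => Z) x v hZ).2 hφ⟩, (hZ.forall_mem_iff x).2 rfl⟩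

end

/-- Over DB₀, Sep(Σ_{n+1}) is deductively equivalent to the
parameter-free schema Sep⁻(Σ_{n+1}). -/
theorem sep_iff_sepMinus (n : ℕ) (M : Type) (E : M → M → Prop)
    (hM : SatDB0 E) :
    SepScheme E (IsSigma (n + 1)) ↔ SepMinusScheme E (IsSigma (n + 1)) := by
  refine ⟨fun h φ hφ hfv => (h φ hφ (hfv.trans (by simp))).sepMinusAx hfv, fun h φ hφ hfv => ?_⟩
  obtain ⟨θ, hθ, hθfv, hθφ⟩ := exists_isSigma_pairCode hφ hfv
  exact hM.sepAx_of_sepMinusAx (h θ hθ hθfv) hθφ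

end FOSet
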